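/- Let G = (V, E) be a finite simple graph in which every vertex is incident to at least one edge, and let α(G) be the maximum cardinality of an independent set. In the ring R = ℤ[z_e : e ∈ E]/(z_e²), the smallest integer k such that every product of k vertex monomials Z_{v_1} ⋯ Z_{v_k} (repetitions allowed) equals zero is k = α(G) + 1. -/

import Mathlib

open scoped Classical

/-- The quotient of the polynomial ring `ℤ[z_e : e ∈ E]` by the ideal generated
by the squares of all edge variables. -/
noncomputable def NilEdgeRing {V : Type*} [Fintype V] [DecidableEq V]
    (G : SimpleGraph V) [DecidableRel G.Adj] : Type _ :=
  MvPolynomial G.edgeSet ℤ ⧸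
    Ideal.span (Set.range fun e : G.edgeSet =>
      (MvPolynomial.X e : MvPolynomial G.edgeSet ℤ) ^ 2)

noncomputable instance {V : Type*} [Fintype V] [DecidableEq V]
    (G : SimpleGraph V) [DecidableRel G.Adj] : CommRing (NilEdgeRing G) :=
  Ideal.Quotient.commRing _

/-- The vertex monomial `Z_v = ∏_{e ∈ E(v)} z_e` in the nilpotent edge ring. -/
noncomputable def vertexMonomial {V : Type*} [Fintype V] [DecidableEq V]
    (G : SimpleGraph V) [DecidableRel G.Adj] (v : V) : NilEdgeRing G :=
  Ideal.Quotient.mk _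
    (∏ e : G.edgeSet, if v ∈ (e : Sym2 V) then MvPolynomial.X e else 1)

/-
If two factors `Z_{v_i}`, `Z_{v_j}` (`i ≠ j`) of a product lie on a common edge `e`, then
`z_e² ∣ Z_{v_i} Z_{v_j}` and the product vanishes. Among `α(G) + 1` vertices either two are
adjacent, or two coincide and then share any edge at that vertex (none is isolated). Conversely,
the vertices of an independent set have pairwise disjoint sets of incident edges, so their product
is a squarefree monomial, which is not in the ideal generated by the `z_e²`.
-/

namespace MvPolynomial

variable {σ R : Type*} [CommSemiring R] [Nontrivial R]

theorem prod_X_notMem_span_X_sq (s : Finset σ) :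
    ∏ i ∈ s, (X i : MvPolynomial σ R) ∉ Ideal.span (Set.range fun i => X i ^ 2) := by
  classical
  have hsq : (Set.range fun i => (X i : MvPolynomial σ R) ^ 2) =
      (fun d => monomial d (1 : R)) '' Set.range fun i => Finsupp.single i 2 := by
    rw [← Set.range_comp]
    congr 1
    funext i
    exact X_pow_eq_monomial
  have hprod : ∏ i ∈ s, (X i : MvPolynomial σ R) = monomial (∑ i ∈ s, Finsupp.single i 1) 1 := by
    rw [monomial_sum_one]
    rfl
  rw [hsq, hprod, mem_ideal_span_monomial_image, support_monomial, if_neg one_ne_zero]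
  intro h
  obtain ⟨_, ⟨i, rfl⟩, hle⟩ := h _ (Finset.mem_singleton_self _)
  have := hle i
  simp only [Finsupp.single_eq_same, Finsupp.finsetSum_apply, Finsupp.single_apply,
    Finset.sum_ite_eq'] at this
  split_ifs at this <;> omega

end MvPolynomial

namespace SimpleGraph

section

variable {V : Type*} [DecidableEq V] {G : SimpleGraph V}

theorem exists_ne_mem_edge (hiso : ∀ v, ∃ u, G.Adj v u) {ι : Type*} [Fintype ι] (f : ι → V)
    (hf : ∀ S : Finset V, G.IsIndepSet S → S.card < Fintype.card ι) :
    ∃ i j, i ≠ j ∧ ∃ e : G.edgeSet, f i ∈ (e : Sym2 V) ∧ f j ∈ (e : Sym2 V) := by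
  by_cases hinj : Function.Injective f
  · have : ¬ G.IsIndepSet (Finset.univ.image f : Finset V) := fun hind =>
      (hf _ hind).ne (by rw [Finset.card_image_of_injective _ hinj, Finset.card_univ])
    obtain ⟨_, hu, _, hv, hne, hadj⟩ : ∃ u ∈ Finset.univ.image f,
        ∃ v ∈ Finset.univ.image f, u ≠ v ∧ G.Adj u v := by
      simpa [IsIndepSet, Set.Pairwise] using this
    obtain ⟨i, -, rfl⟩ := Finset.mem_image.mp hu
    obtain ⟨j, -, rfl⟩ := Finset.mem_image.mp hv
    exact ⟨i, j, ne_of_apply_ne f hne, ⟨s(f i, f j), hadj⟩, Sym2.mem_mk_left _ _,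
      Sym2.mem_mk_right _ _⟩
  · obtain ⟨i, j, hfij, hij⟩ := Function.not_injective_iff.mp hinj
    obtain ⟨u, hadj⟩ := hiso (f i)
    exact ⟨i, j, hij, ⟨s(f i, u), hadj⟩, Sym2.mem_mk_left _ _, hfij ▸ Sym2.mem_mk_left _ _⟩

end

variable {V : Type*} [Fintype V] [DecidableEq V] (G : SimpleGraph V) [DecidableRel G.Adj]

noncomputable abbrev edgeSqIdeal : Ideal (MvPolynomial G.edgeSet ℤ) :=
  Ideal.span (Set.range fun e : G.edgeSet => (MvPolynomial.X e : MvPolynomial G.edgeSet ℤ) ^ 2)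

noncomputable def nilEdgeRingMk : MvPolynomial G.edgeSet ℤ →+* NilEdgeRing G :=
  Ideal.Quotient.mk G.edgeSqIdeal

theorem nilEdgeRingMk_eq_zero_iff {p : MvPolynomial G.edgeSet ℤ} :
    G.nilEdgeRingMk p = 0 ↔ p ∈ G.edgeSqIdeal :=
  Ideal.Quotient.eq_zero_iff_mem

def incidentEdges (v : V) : Finset G.edgeSet :=
  {e | v ∈ (e : Sym2 V)}

variable {G}

theorem vertexMonomial_eq (v : V) :
    vertexMonomial G v =
      G.nilEdgeRingMk (∏ e ∈ G.incidentEdges v, MvPolynomial.X e) := by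
  rw [incidentEdges, Finset.prod_filter]
  rfl

theorem X_dvd_vertexMonomial {v : V} {e : G.edgeSet} (he : v ∈ (e : Sym2 V)) :
    G.nilEdgeRingMk (MvPolynomial.X e) ∣ vertexMonomial G v := by
  rw [vertexMonomial_eq]
  exact map_dvd _ (Finset.dvd_prod_of_mem _ (by simp [incidentEdges, he]))

theorem nilEdgeRingMk_X_sq (e : G.edgeSet) :
    G.nilEdgeRingMk (MvPolynomial.X e) ^ 2 = 0 := by
  rw [← map_pow, nilEdgeRingMk_eq_zero_iff]
  exact Ideal.subset_span ⟨e, rfl⟩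

theorem prod_vertexMonomial_eq_zero_of_mem_edge {ι : Type*} [Fintype ι] [DecidableEq ι]
    (f : ι → V) {i j : ι} (hij : i ≠ j) (e : G.edgeSet) (hi : f i ∈ (e : Sym2 V))
    (hj : f j ∈ (e : Sym2 V)) : ∏ k, vertexMonomial G (f k) = 0 := by
  have hdvd : G.nilEdgeRingMk (MvPolynomial.X e) ^ 2 ∣
      ∏ k, vertexMonomial G (f k) := calc
    _ = _ * _ := sq _
    _ ∣ vertexMonomial G (f i) * vertexMonomial G (f j) :=
        mul_dvd_mul (X_dvd_vertexMonomial hi) (X_dvd_vertexMonomial hj)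
    _ = ∏ k ∈ {i, j}, vertexMonomial G (f k) :=
        (Finset.prod_pair (f := fun k => vertexMonomial G (f k)) hij).symm
    _ ∣ _ := Finset.prod_dvd_prod_of_subset _ _ _ (Finset.subset_univ _)
  rwa [nilEdgeRingMk_X_sq, zero_dvd_iff] at hdvd

theorem disjoint_incidentEdges {u v : V} (huv : u ≠ v) (h : ¬ G.Adj u v) :
    Disjoint (G.incidentEdges u) (G.incidentEdges v) := by
  refine Finset.disjoint_left.mpr fun e hu hv => h ?_
  simp only [incidentEdges, Finset.mem_filter, Finset.mem_univ, true_and] at hu hv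
  have : (e : Sym2 V) = s(u, v) := (Sym2.mem_and_mem_iff huv).mp ⟨hu, hv⟩
  simpa [this] using e.2

theorem prod_vertexMonomial_ne_zero {S : Finset V} (hS : G.IsIndepSet S) :
    ∏ v ∈ S, vertexMonomial G v ≠ 0 := by
  simp_rw [vertexMonomial_eq, ← map_prod]
  rw [← Finset.prod_biUnion fun u hu v hv huv => disjoint_incidentEdges huv (hS hu hv huv),
    Ne, nilEdgeRingMk_eq_zero_iff]
  exact MvPolynomial.prod_X_notMem_span_X_sq _

theorem exists_prod_vertexMonomial_ne_zero {S : Finset V} (hS : G.IsIndepSet S) {k : ℕ}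
    (hk : k ≤ S.card) : ∃ f : Fin k → V, ∏ i, vertexMonomial G (f i) ≠ 0 := by
  obtain ⟨T, hTS, rfl⟩ := Finset.exists_subset_card_eq hk
  refine ⟨fun i => T.equivFin.symm i, ?_⟩
  rw [Equiv.prod_comp T.equivFin.symm (fun x : T => vertexMonomial G x), Finset.prod_coe_sort]
  exact prod_vertexMonomial_ne_zero (hS.mono (Finset.coe_subset.mpr hTS))

end SimpleGraph

/-- if G has no isolated vertices and α(G) = a is the independence
number, then the least k such that every product of k vertex monomials
(repetitions allowed) is zero equals a + 1. -/
theorem stmt_6 {V : Type*} [Fintype V] [DecidableEq V] (G : SimpleGraph V)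
    [DecidableRel G.Adj] (hiso : ∀ v : V, ∃ u : V, G.Adj v u) (a : ℕ)
    (ha : IsGreatest {k | ∃ S : Finset V, S.card = k ∧
        (S : Set V).Pairwise fun u v => ¬ G.Adj u v} a) :
    IsLeast {k | ∀ f : Fin k → V, (∏ i, vertexMonomial G (f i)) = 0}
      (a + 1) := by
  refine ⟨fun f => ?_, fun k hk => ?_⟩
  · obtain ⟨i, j, hij, e, hi, hj⟩ := SimpleGraph.exists_ne_mem_edge hiso f fun S hS => by
      simpa [Nat.lt_succ_iff] using ha.2 ⟨S, rfl, hS⟩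
    exact SimpleGraph.prod_vertexMonomial_eq_zero_of_mem_edge f hij e hi hj
  · by_contra! hlt
    obtain ⟨S, hcard, hS⟩ := ha.1
    obtain ⟨f, hf⟩ := SimpleGraph.exists_prod_vertexMonomial_ne_zero hS (by omega : k ≤ S.card)
    exact hf (hk f)
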